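/- arXiv:1412.5563 — 9 statements merged into one kernel-verified Lean document; each statement's English description precedes it below -/
import Mathlib

section
/- If α : ℕ → ℕ is a I-modulus of total boundedness for a nonempty subset A of a metric space X (i.e., for every k there exist points a₀,…,a_{α(k)} ∈ X such that every x ∈ A is within distance 1/(k+1) of some aᵢ), then γ(k) := α(2k+1)+1 is a II-modulus of total boundedness for A (i.e., for every k and every sequence (xₙ) in A there exist 0 ≤ i < j ≤ γ(k) with d(xᵢ,xⱼ) ≤ 1/(k+1)). -/
theorem exists_lt_le_dist_le_two_mul_of_cover {X : Type*} [PseudoMetricSpace X] {A : Set X}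
    {a : ℕ → X} {m : ℕ} {r : ℝ} (hcover : ∀ y ∈ A, ∃ i ≤ m, dist y (a i) ≤ r)
    {x : ℕ → X} (hx : ∀ n, x n ∈ A) :
    ∃ i j : ℕ, i < j ∧ j ≤ m + 1 ∧ dist (x i) (x j) ≤ 2 * r := by
  choose f hf hdist using fun n => hcover (x n) (hx n)
  have hmaps : ∀ n ∈ Finset.range (m + 2), f n ∈ Finset.range (m + 1) :=
    fun n _ => Finset.mem_range.2 (Nat.lt_succ_of_le (hf n))
  obtain ⟨i, hi, j, hj, hne, hfij⟩ :=
    Finset.exists_ne_map_eq_of_card_lt_of_maps_to (by simp) hmaps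
  have hclose : dist (x i) (x j) ≤ 2 * r :=
    calc dist (x i) (x j) ≤ dist (x i) (a (f i)) + dist (x j) (a (f j)) := by
          rw [hfij]; exact dist_triangle_right _ _ _
      _ ≤ 2 * r := by linarith [hdist i, hdist j]
  rw [Finset.mem_range, Nat.lt_succ_iff] at hi hj
  rcases hne.lt_or_gt with h | h
  · exact ⟨i, j, h, hj, hclose⟩
  · exact ⟨j, i, h, hi, dist_comm (x i) (x j) ▸ hclose⟩

theorem stmt0_general {X : Type*} [MetricSpace X] (A : Set X)
    (α : ℕ → ℕ)
    (hα : ∀ k : ℕ, ∃ a : ℕ → X, ∀ x ∈ A, ∃ i ≤ α k, dist x (a i) ≤ 1 / (k + 1)) :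
    ∀ k : ℕ, ∀ x : ℕ → X, (∀ n, x n ∈ A) →
      ∃ i j : ℕ, i < j ∧ j ≤ α (2 * k + 1) + 1 ∧ dist (x i) (x j) ≤ 1 / (k + 1) := by
  intro k x hx
  obtain ⟨a, ha⟩ := hα (2 * k + 1)
  have hradius : 2 * (1 / (((2 * k + 1 : ℕ) : ℝ) + 1)) = 1 / ((k : ℝ) + 1) := by
    push_cast
    field_simp
    ring
  simpa only [hradius] using exists_lt_le_dist_le_two_mul_of_cover ha hx

theorem stmt0 {X : Type*} [MetricSpace X] (A : Set X) (hA : A.Nonempty)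
    (α : ℕ → ℕ)
    (hα : ∀ k : ℕ, ∃ a : ℕ → X, ∀ x ∈ A, ∃ i ≤ α k, dist x (a i) ≤ 1 / (k + 1)) :
    ∀ k : ℕ, ∀ x : ℕ → X, (∀ n, x n ∈ A) →
      ∃ i j : ℕ, i < j ∧ j ≤ α (2 * k + 1) + 1 ∧ dist (x i) (x j) ≤ 1 / (k + 1) :=
  stmt0_general A α hα
end

section
/- If γ : ℕ → ℕ is a II-modulus of total boundedness for a nonempty subset A of a metric space X, then α(k) := γ(k) − 1 is a I-modulus of total boundedness for A; in particular, A is totally bounded. -/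
/-!
If no `γ k` points `1/(k+1)`-cover `A`, one chooses greedily a sequence in `A` each of whose
terms lies farther than `1/(k+1)` from all earlier ones, which the II-modulus forbids. A finite
`1/(k+1)`-net for every `k` then gives total boundedness.
-/

open Metric

theorem Nat.exists_seq_eq_apply_prefix {α : Type*} (f : (ℕ → α) → α) (d : α) :
    ∃ x : ℕ → α, ∀ n, x n = f fun i => if i < n then x i else d :=
  ⟨fun n => Nat.strongRec (fun n x => f fun i => if h : i < n then x i h else d) n,
    fun n => Nat.strongRec_eq _ n⟩

theorem exists_cover_of_forall_seq_exists_dist_le {X : Type*} [PseudoMetricSpace X] [Nonempty X]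
    {A : Set X} {N : ℕ} {r : ℝ}
    (h : ∀ x : ℕ → X, (∀ n, x n ∈ A) → ∃ i j, i < j ∧ j ≤ N ∧ dist (x i) (x j) ≤ r) :
    ∃ a : ℕ → X, ∀ y ∈ A, ∃ i < N, dist y (a i) ≤ r := by
  by_contra! hfar
  choose f hfA hfar using hfar
  obtain ⟨x, hx⟩ := Nat.exists_seq_eq_apply_prefix f (Classical.arbitrary X)
  obtain ⟨i, j, hij, hjN, hclose⟩ := h x fun n => hx n ▸ hfA _
  have hxj_far := hfar (fun i => if i < j then x i else Classical.arbitrary X) i (hij.trans_le hjN)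
  rw [← hx j, if_pos hij, dist_comm] at hxj_far
  exact hclose.not_gt hxj_far

theorem totallyBounded_of_forall_exists_dist_le {X : Type*} [PseudoMetricSpace X] {A : Set X}
    (α : ℕ → ℕ) (h : ∀ k : ℕ, ∃ a : ℕ → X, ∀ y ∈ A, ∃ i ≤ α k, dist y (a i) ≤ 1 / (k + 1)) :
    TotallyBounded A := by
  refine totallyBounded_iff.2 fun ε hε => ?_
  obtain ⟨k, hk⟩ := exists_nat_one_div_lt hε
  obtain ⟨a, ha⟩ := h k
  refine ⟨a '' Set.Iic (α k), (Set.finite_Iic _).image a, fun y hy => ?_⟩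
  obtain ⟨i, hi, hdist⟩ := ha y hy
  exact Set.mem_biUnion (Set.mem_image_of_mem a hi) (mem_ball.2 (hdist.trans_lt hk))

theorem stmt1 {X : Type*} [MetricSpace X] (A : Set X) (hA : A.Nonempty)
    (γ : ℕ → ℕ)
    (hγ : ∀ k : ℕ, ∀ x : ℕ → X, (∀ n, x n ∈ A) →
      ∃ i j : ℕ, i < j ∧ j ≤ γ k ∧ dist (x i) (x j) ≤ 1 / (k + 1)) :
    (∀ k : ℕ, ∃ a : ℕ → X, ∀ x ∈ A, ∃ i ≤ γ k - 1, dist x (a i) ≤ 1 / (k + 1)) ∧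
      TotallyBounded A := by
  have : Nonempty X := ⟨hA.some⟩
  have hcover (k : ℕ) : ∃ a : ℕ → X, ∀ x ∈ A, ∃ i ≤ γ k - 1, dist x (a i) ≤ 1 / (k + 1) := by
    obtain ⟨a, ha⟩ := exists_cover_of_forall_seq_exists_dist_le (hγ k)
    exact ⟨a, fun x hx => (ha x hx).imp fun i hi => ⟨Nat.le_sub_one_of_lt hi.1, hi.2⟩⟩
  exact ⟨hcover, totallyBounded_of_forall_exists_dist_le _ hcover⟩
end

section
/- Let X be a metric space with II-modulus of total boundedness γ (so every sequence of γ(0)+1 points contains two at distance ≤ 1). For sequences (xₙ),(yₙ) in X define recursively n₀ := 0 and n_{k+1} := ⌈max over i,j ≤ k of { n_k, d(x_{nᵢ},y_{nⱼ}), d(x_{nᵢ},x_{nⱼ}), d(y_{nᵢ},y_{nⱼ}) } + 3⌉. Then there exists N ≤ n_{γ(0)} with d(x_N, y_N) < N. -/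
/-!
Suppose `d(x_N, y_N) ≥ N` for all `N ≤ n_{γ(0)}`. Let `A_j` be the set of the points `x_{n_a}, y_{n_a}`
with `a < j`. By construction of `n_j`, any two points of `A_j` are at distance at most `n_j - 3`,
while `d(x_{n_j}, y_{n_j}) ≥ n_j`; so `x_{n_j}` and `y_{n_j}` cannot both lie within `3/2` of `A_j`.
Picking for each `j` one of them that is `3/2`-far from `A_j` gives a sequence whose first
`γ(0) + 1` terms are pairwise more than `1` apart, contradicting the modulus `γ`.
-/

open Set

section

variable {X : Type*} [MetricSpace X]

theorem Finset.add_le_of_eq_natCeil_sup'_add {ι : Type*} {s : Finset ι} {hs : s.Nonempty}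
    {f : ι → ℝ} {c : ℝ} {m : ℕ} (hm : m = ⌈s.sup' hs f + c⌉₊) {i : ι} (hi : i ∈ s) :
    f i + c ≤ m :=
  hm ▸ (add_le_add_left (s.le_sup' f hi) c).trans (Nat.le_ceil _)

theorem forall_le_dist_or_forall_le_dist {A : Set X} {u v : X} {r D : ℝ}
    (hA : ∀ a ∈ A, ∀ b ∈ A, dist a b + 2 * r ≤ D) (huv : D ≤ dist u v) :
    (∀ a ∈ A, r ≤ dist u a) ∨ ∀ b ∈ A, r ≤ dist v b := by
  by_contra! ⟨⟨a, ha, hua⟩, b, hb, hvb⟩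
  linarith [dist_triangle4 u a b v, hA a ha b hb, dist_comm v b]

def initialPoints (p q : ℕ → X) (j : ℕ) : Set X := p '' Iio j ∪ q '' Iio j

theorem dist_add_le_of_mem_initialPoints {p q : ℕ → X} {m : ℕ → ℝ} {c : ℝ}
    (h : ∀ k, ∀ a ≤ k, ∀ b ≤ k,
      max (dist (p a) (q b)) (max (dist (p a) (p b)) (dist (q a) (q b))) + c ≤ m (k + 1))
    {j : ℕ} {u v : X} (hu : u ∈ initialPoints p q j) (hv : v ∈ initialPoints p q j) :
    dist u v + c ≤ m j := by
  obtain _ | k := j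
  · simp [initialPoints] at hu
  have hle : ∀ a ≤ k, ∀ b ≤ k, dist (p a) (q b) + c ≤ m (k + 1) ∧
      dist (p a) (p b) + c ≤ m (k + 1) ∧ dist (q a) (q b) + c ≤ m (k + 1) := by
    intro a ha b hb
    have := le_sub_iff_add_le.mpr (h k a ha b hb)
    simp only [max_le_iff, ← le_sub_iff_add_le] at this ⊢
    exact this
  simp only [initialPoints, mem_union, mem_image, mem_Iio, Nat.lt_succ_iff] at hu hv
  rcases hu with ⟨a, ha, rfl⟩ | ⟨a, ha, rfl⟩ <;> rcases hv with ⟨b, hb, rfl⟩ | ⟨b, hb, rfl⟩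
  · exact (hle a ha b hb).2.1
  · exact (hle a ha b hb).1
  · rw [dist_comm]; exact (hle b hb a ha).1
  · exact (hle a ha b hb).2.2

theorem exists_dist_lt_of_initialPoints {J : ℕ} {δ r : ℝ} (hδr : δ < r)
    (hJ : ∀ z : ℕ → X, ∃ i j : ℕ, i < j ∧ j ≤ J ∧ dist (z i) (z j) ≤ δ)
    (p q : ℕ → X) (m : ℕ → ℝ)
    (hA : ∀ j, ∀ a ∈ initialPoints p q j, ∀ b ∈ initialPoints p q j, dist a b + 2 * r ≤ m j) :
    ∃ j ≤ J, dist (p j) (q j) < m j := by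
  classical
  by_contra! hfar
  let z : ℕ → X := fun j => if ∀ a ∈ initialPoints p q j, r ≤ dist (p j) a then p j else q j
  have hz_far : ∀ j ≤ J, ∀ a ∈ initialPoints p q j, r ≤ dist (z j) a := by
    intro j hj
    dsimp only [z]
    split_ifs with h
    exacts [h, (forall_le_dist_or_forall_le_dist (hA j) (hfar j hj)).resolve_left h]
  have hz_mem : ∀ {i j}, i < j → z i ∈ initialPoints p q j := by
    intro i j hij
    dsimp only [z]
    split_ifs
    exacts [Or.inl ⟨i, hij, rfl⟩, Or.inr ⟨i, hij, rfl⟩]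
  obtain ⟨i, j, hij, hjJ, hd⟩ := hJ z
  linarith [hz_far j hjJ _ (hz_mem hij), dist_comm (z i) (z j)]

end

theorem stmt5_general {X : Type*} [MetricSpace X] (γ : ℕ → ℕ)
    (hγ : ∀ k : ℕ, ∀ z : ℕ → X, ∃ i j : ℕ, i < j ∧ j ≤ γ k ∧
      dist (z i) (z j) ≤ 1 / (k + 1))
    (x y : ℕ → X) (n : ℕ → ℕ)
    (hn : ∀ k : ℕ, n (k + 1) =
      ⌈((Finset.range (k + 1) ×ˢ Finset.range (k + 1)).sup'
          (Finset.Nonempty.product (Finset.nonempty_range_iff.mpr (Nat.succ_ne_zero k))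
            (Finset.nonempty_range_iff.mpr (Nat.succ_ne_zero k)))
          (fun ij => max ((n k : ℝ))
            (max (dist (x (n ij.1)) (y (n ij.2)))
              (max (dist (x (n ij.1)) (x (n ij.2))) (dist (y (n ij.1)) (y (n ij.2))))))) + 3⌉₊) :
    ∃ N ≤ n (γ 0), dist (x N) (y N) < N := by
  have hstep : ∀ k, ∀ a ≤ k, ∀ b ≤ k, max (n k : ℝ) (max (dist (x (n a)) (y (n b)))
      (max (dist (x (n a)) (x (n b))) (dist (y (n a)) (y (n b))))) + 3 ≤ n (k + 1) := by
    intro k a ha b hb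
    exact Finset.add_le_of_eq_natCeil_sup'_add (hn k) (i := (a, b))
      (Finset.mem_product.mpr ⟨Finset.mem_range_succ_iff.mpr ha, Finset.mem_range_succ_iff.mpr hb⟩)
  have hmono : Monotone n := monotone_nat_of_le_succ fun k => by
    have := hstep k 0 k.zero_le 0 k.zero_le
    exact_mod_cast (le_max_left _ _).trans (le_of_add_le_of_nonneg_left this zero_le_three)
  have hA : ∀ j, ∀ u ∈ initialPoints (fun a => x (n a)) (fun a => y (n a)) j,
      ∀ v ∈ initialPoints (fun a => x (n a)) (fun a => y (n a)) j,
      dist u v + 2 * (3 / 2) ≤ (n j : ℝ) := fun j u hu v hv =>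
    dist_add_le_of_mem_initialPoints (m := fun j => (n j : ℝ)) (fun k a ha b hb => by
      linarith [hstep k a ha b hb, le_max_right (n k : ℝ) (max (dist (x (n a)) (y (n b)))
        (max (dist (x (n a)) (x (n b))) (dist (y (n a)) (y (n b)))))]) hu hv
  obtain ⟨j, hj, hlt⟩ := exists_dist_lt_of_initialPoints (by norm_num : (1 : ℝ) < 3 / 2)
    (by simpa using hγ 0) _ _ _ hA
  exact ⟨n j, hmono hj, hlt⟩

theorem stmt5 {X : Type*} [MetricSpace X] (γ : ℕ → ℕ)
    (hγ : ∀ k : ℕ, ∀ z : ℕ → X, ∃ i j : ℕ, i < j ∧ j ≤ γ k ∧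
      dist (z i) (z j) ≤ 1 / (k + 1))
    (x y : ℕ → X) (n : ℕ → ℕ) (hn0 : n 0 = 0)
    (hn : ∀ k : ℕ, n (k + 1) =
      ⌈((Finset.range (k + 1) ×ˢ Finset.range (k + 1)).sup'
          (Finset.Nonempty.product (Finset.nonempty_range_iff.mpr (Nat.succ_ne_zero k))
            (Finset.nonempty_range_iff.mpr (Nat.succ_ne_zero k)))
          (fun ij => max ((n k : ℝ))
            (max (dist (x (n ij.1)) (y (n ij.2)))
              (max (dist (x (n ij.1)) (x (n ij.2))) (dist (y (n ij.1)) (y (n ij.2))))))) + 3⌉₊) :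
    ∃ N ≤ n (γ 0), dist (x N) (y N) < N :=
  stmt5_general γ hγ x y n hn
end

section
/- Let (xₙ) be (G,H)-Fejér monotone with respect to a nonempty set F ⊆ X, where G has a G-modulus α_G and H has an H-modulus β_H. If the set {xₙ : n ∈ ℕ} has an adherent point x̂ ∈ F, then (xₙ) converges to x̂. -/
/-!
If the distance to a point `p ∈ F` drops below `1/(α_G(β_H k)+1)` at some index `n`, then the
two moduli and Fejér monotonicity keep it below `1/(k+1)` at every later index. Since `x̂ ∈ F` is
adherent to the sequence, every such threshold is reached at some index.
-/

open Filter Topology Metric Set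

section FejerMonotone

variable {X : Type*} [PseudoMetricSpace X]

def IsGModulus (G : NNReal → NNReal) (α : ℕ → ℕ) : Prop :=
  ∀ k : ℕ, ∀ a : NNReal, a ≤ ((α k : NNReal) + 1)⁻¹ → G a ≤ ((k : NNReal) + 1)⁻¹

def IsHModulus (H : NNReal → NNReal) (β : ℕ → ℕ) : Prop :=
  ∀ k : ℕ, ∀ a : NNReal, H a ≤ ((β k : NNReal) + 1)⁻¹ → a ≤ ((k : NNReal) + 1)⁻¹

def IsFejerMonotone (G H : NNReal → NNReal) (F : Set X) (x : ℕ → X) : Prop :=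
  ∀ n m : ℕ, ∀ p ∈ F, H (nndist (x (n + m)) p) ≤ G (nndist (x n) p)

lemma nndist_le_inv_succ_iff {a b : X} {k : ℕ} :
    nndist a b ≤ ((k : NNReal) + 1)⁻¹ ↔ dist a b ≤ 1 / ((k : ℝ) + 1) := by
  rw [← NNReal.coe_le_coe, coe_nndist, one_div]
  push_cast
  rfl

namespace IsFejerMonotone

variable {G H : NNReal → NNReal} {α β : ℕ → ℕ} {F : Set X} {x : ℕ → X}

lemma nndist_le_of_le (hx : IsFejerMonotone G H F x) (hα : IsGModulus G α)
    (hβ : IsHModulus H β) {p : X} (hp : p ∈ F) {n k : ℕ}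
    (hn : nndist (x n) p ≤ ((α (β k) : NNReal) + 1)⁻¹) {m : ℕ} (hm : n ≤ m) :
    nndist (x m) p ≤ ((k : NNReal) + 1)⁻¹ := by
  obtain ⟨m, rfl⟩ := Nat.exists_eq_add_of_le hm
  exact hβ k _ ((hx n m p hp).trans (hα (β k) _ hn))

theorem tendsto_of_mem_closure_range (hx : IsFejerMonotone G H F x) (hα : IsGModulus G α)
    (hβ : IsHModulus H β) {x' : X} (hx'F : x' ∈ F) (hadh : x' ∈ closure (range x)) :
    Tendsto x atTop (𝓝 x') := by
  refine nhds_basis_closedBall_inv_nat_succ.tendsto_right_iff.mpr fun k _ => ?_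
  obtain ⟨n, hn⟩ := mem_closure_range_iff_nat.mp hadh (α (β k))
  have hn' : nndist (x n) x' ≤ ((α (β k) : NNReal) + 1)⁻¹ :=
    nndist_le_inv_succ_iff.mpr (dist_comm x' (x n) ▸ hn.le)
  filter_upwards [eventually_ge_atTop n] with m hm
  exact nndist_le_inv_succ_iff.mp (hx.nndist_le_of_le hα hβ hx'F hn' hm)

end IsFejerMonotone

end FejerMonotone

theorem stmt8_general {X : Type*} [MetricSpace X] (F : Set X)
    (G H : NNReal → NNReal) (αG βH : ℕ → ℕ)
    (hαG : ∀ k : ℕ, ∀ a : NNReal, a ≤ ((αG k : NNReal) + 1)⁻¹ → G a ≤ ((k : NNReal) + 1)⁻¹)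
    (hβH : ∀ k : ℕ, ∀ a : NNReal, H a ≤ ((βH k : NNReal) + 1)⁻¹ → a ≤ ((k : NNReal) + 1)⁻¹)
    (x : ℕ → X)
    (hfejer : ∀ n m : ℕ, ∀ p ∈ F, H (nndist (x (n + m)) p) ≤ G (nndist (x n) p))
    (x' : X) (hx'F : x' ∈ F) (hadh : x' ∈ closure (Set.range x)) :
    Filter.Tendsto x Filter.atTop (nhds x') :=
  IsFejerMonotone.tendsto_of_mem_closure_range hfejer hαG hβH hx'F hadh

theorem stmt8 {X : Type*} [MetricSpace X] (F : Set X) (hF : F.Nonempty)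
    (G H : NNReal → NNReal) (αG βH : ℕ → ℕ)
    (hαG : ∀ k : ℕ, ∀ a : NNReal, a ≤ ((αG k : NNReal) + 1)⁻¹ → G a ≤ ((k : NNReal) + 1)⁻¹)
    (hβH : ∀ k : ℕ, ∀ a : NNReal, H a ≤ ((βH k : NNReal) + 1)⁻¹ → a ≤ ((k : NNReal) + 1)⁻¹)
    (x : ℕ → X)
    (hfejer : ∀ n m : ℕ, ∀ p ∈ F, H (nndist (x (n + m)) p) ≤ G (nndist (x n) p))
    (x' : X) (hx'F : x' ∈ F) (hadh : x' ∈ closure (Set.range x)) :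
    Filter.Tendsto x Filter.atTop (nhds x') :=
  stmt8_general F G H αG βH hαG hβH x hfejer x' hx'F hadh
end

section
/- Let X be a totally bounded metric space and let (xₙ) be a sequence that is uniformly (G,H)-Fejér monotone with respect to F = ⋂ₖ AF_k and has approximate F-points, where G has a G-modulus and H has an H-modulus. Then (xₙ) is a Cauchy sequence. -/
/-! Total boundedness makes the approximate `F`-points cluster: some `x n` is arbitrarily close
to points `p` of every `AF k`. Uniform Fejér monotonicity, at a level chosen from the moduli,
then keeps the whole tail `x (n + l)`, up to any horizon, within `1/(k+1)` of one such `p`: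
`d(x n, p)` small makes `G` small, hence `H (d(x (n + l), p))` small, hence `d(x (n + l), p)` small.
Two tail points are therefore within `2/(k+1)` of each other. -/

open Filter

section

variable {X : Type*} [MetricSpace X]

theorem TotallyBounded.exists_frequently_dist_lt (htb : TotallyBounded (Set.univ : Set X))
    (y : ℕ → X) {δ : ℝ} (hδ : 0 < δ) : ∃ i, ∃ᶠ j in atTop, dist (y i) (y j) < δ := by
  let U := Ultrafilter.of (atTop : Filter ℕ)
  have hcauchy : Cauchy (map y U) :=
    totallyBounded_iff_ultrafilter.mp htb (U.map y) (by simp)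
  obtain ⟨t, ht, hsmall⟩ := Metric.cauchy_iff.mp hcauchy |>.2 δ hδ
  have hU : ∀ᶠ j in (U : Filter ℕ), y j ∈ t := ht
  obtain ⟨i, hi⟩ := hU.exists
  exact ⟨i, (hU.mono fun j hj => hsmall _ hi _ hj).frequently.filter_mono (Ultrafilter.of_le _)⟩

theorem cauchySeq_of_forall_exists_dist_lt {x : ℕ → X}
    (h : ∀ ε > 0, ∃ n, ∀ m, ∃ p, ∀ l ≤ m, dist (x (n + l)) p < ε) : CauchySeq x := by
  refine Metric.cauchySeq_iff.mpr fun ε hε => ?_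
  obtain ⟨n, hn⟩ := h (ε / 2) (half_pos hε)
  refine ⟨n, fun i hi j hj => ?_⟩
  obtain ⟨p, hp⟩ := hn (max i j - n)
  have hpi := hp (i - n) (by omega)
  have hpj := hp (j - n) (by omega)
  rw [Nat.add_sub_cancel' hi] at hpi
  rw [Nat.add_sub_cancel' hj] at hpj
  calc dist (x i) (x j) ≤ dist (x i) p + dist (x j) p := dist_triangle_right _ _ _
    _ < ε / 2 + ε / 2 := add_lt_add hpi hpj
    _ = ε := add_halves ε

theorem exists_forall_exists_mem_dist_lt (htb : TotallyBounded (Set.univ : Set X))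
    {AF : ℕ → Set X} (hmono : Antitone AF) {x : ℕ → X} (happrox : ∀ k, ∃ n, x n ∈ AF k)
    {δ : ℝ} (hδ : 0 < δ) : ∃ n, ∀ k, ∃ p ∈ AF k, dist (x n) p < δ := by
  choose f hf using happrox
  obtain ⟨i, hi⟩ := htb.exists_frequently_dist_lt (x ∘ f) hδ
  refine ⟨f i, fun k => ?_⟩
  obtain ⟨j, hkj, hij⟩ := frequently_atTop.mp hi k
  exact ⟨x (f j), hmono hkj (hf j), hij⟩

end

theorem le_inv_succ_of_lt_add_modulus {G H : NNReal → NNReal} {αG βH : ℕ → ℕ}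
    (hαG : ∀ k : ℕ, ∀ a : NNReal, a ≤ ((αG k : NNReal) + 1)⁻¹ → G a ≤ ((k : NNReal) + 1)⁻¹)
    (hβH : ∀ k : ℕ, ∀ a : NNReal, H a ≤ ((βH k : NNReal) + 1)⁻¹ → a ≤ ((k : NNReal) + 1)⁻¹)
    {k : ℕ} {a b : NNReal} (ha : a ≤ ((αG (2 * βH k + 1) : NNReal) + 1)⁻¹)
    (hb : H b < G a + (((2 * βH k + 1 : ℕ) : NNReal) + 1)⁻¹) : b ≤ ((k : NNReal) + 1)⁻¹ := by
  refine hβH k b ?_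
  set c : NNReal := (((2 * βH k + 1 : ℕ) : NNReal) + 1)⁻¹
  have hc : c + c = ((βH k : NNReal) + 1)⁻¹ := by
    rw [← two_mul, ← div_eq_mul_inv, div_eq_iff (by positivity)]
    push_cast
    field_simp
    ring
  calc H b ≤ G a + c := hb.le
    _ ≤ c + c := add_le_add_left (hαG _ a ha) c
    _ = ((βH k : NNReal) + 1)⁻¹ := hc

theorem stmt10_general {X : Type*} [MetricSpace X]
    (htb : TotallyBounded (Set.univ : Set X))
    (AF : ℕ → Set X) (hmono : Antitone AF)
    (G H : NNReal → NNReal) (αG βH : ℕ → ℕ)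
    (hαG : ∀ k : ℕ, ∀ a : NNReal, a ≤ ((αG k : NNReal) + 1)⁻¹ → G a ≤ ((k : NNReal) + 1)⁻¹)
    (hβH : ∀ k : ℕ, ∀ a : NNReal, H a ≤ ((βH k : NNReal) + 1)⁻¹ → a ≤ ((k : NNReal) + 1)⁻¹)
    (x : ℕ → X)
    (hufejer : ∀ r n m : ℕ, ∃ k : ℕ, ∀ p ∈ AF k, ∀ l ≤ m,
      H (nndist (x (n + l)) p) < G (nndist (x n) p) + ((r : NNReal) + 1)⁻¹)
    (happrox : ∀ k : ℕ, ∃ n : ℕ, x n ∈ AF k) :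
    CauchySeq x := by
  refine cauchySeq_of_forall_exists_dist_lt fun ε hε => ?_
  obtain ⟨k, hk⟩ := exists_nat_one_div_lt hε
  obtain ⟨n, hn⟩ := exists_forall_exists_mem_dist_lt htb hmono happrox
    (δ := ((αG (2 * βH k + 1) : ℝ) + 1)⁻¹) (by positivity)
  refine ⟨n, fun m => ?_⟩
  obtain ⟨k', hk'⟩ := hufejer (2 * βH k + 1) n m
  obtain ⟨p, hp, hnp⟩ := hn k'
  refine ⟨p, fun l hl => ?_⟩
  have hnp' : nndist (x n) p ≤ ((αG (2 * βH k + 1) : NNReal) + 1)⁻¹ := by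
    rw [← NNReal.coe_le_coe, coe_nndist]
    exact_mod_cast hnp.le
  have hl' : dist (x (n + l)) p ≤ ((k : ℝ) + 1)⁻¹ := by
    rw [← coe_nndist]
    exact_mod_cast le_inv_succ_of_lt_add_modulus hαG hβH hnp' (hk' p hp l hl)
  exact hl'.trans_lt (by simpa using hk)

theorem stmt10 {X : Type*} [MetricSpace X]
    (htb : TotallyBounded (Set.univ : Set X))
    (AF : ℕ → Set X) (hmono : Antitone AF) (hne : (⋂ k, AF k).Nonempty)
    (G H : NNReal → NNReal) (αG βH : ℕ → ℕ)
    (hαG : ∀ k : ℕ, ∀ a : NNReal, a ≤ ((αG k : NNReal) + 1)⁻¹ → G a ≤ ((k : NNReal) + 1)⁻¹)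
    (hβH : ∀ k : ℕ, ∀ a : NNReal, H a ≤ ((βH k : NNReal) + 1)⁻¹ → a ≤ ((k : NNReal) + 1)⁻¹)
    (x : ℕ → X)
    (hufejer : ∀ r n m : ℕ, ∃ k : ℕ, ∀ p ∈ AF k, ∀ l ≤ m,
      H (nndist (x (n + l)) p) < G (nndist (x n) p) + ((r : NNReal) + 1)⁻¹)
    (happrox : ∀ k : ℕ, ∃ n : ℕ, x n ∈ AF k) :
    CauchySeq x :=
  stmt10_general htb AF hmono G H αG βH hαG hβH x hufejer happrox
end

section
/- Let T : C → C be nonexpansive and (xₙ) its Picard iteration. Then (xₙ) is uniformly Fejér monotone with respect to Fix(T), represented by AF_k = {p ∈ C : d(p,Tp) ≤ 1/(k+1)}, with modulus χ(n,m,r) = m(r+1): for all r,n,m ∈ ℕ and all p ∈ C with d(p,Tp) ≤ 1/(m(r+1)+1), one has d(x_{n+l},p) < d(xₙ,p) + 1/(r+1) for all l ≤ m. -/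
/-! Nonexpansiveness and the triangle inequality through `T p` show that each step of the
Picard iteration moves it at most `d(p, Tp)` further away from `p`, so after `l ≤ m` steps the
distance has grown by at most `m · d(p, Tp) ≤ m / (m(r+1) + 1) < 1/(r+1)`. -/

theorem picard_mem {X : Type*} {C : Set X} {T : X → X} {x : ℕ → X} (hT : Set.MapsTo T C C)
    (hx0 : x 0 ∈ C) (hxs : ∀ n, x (n + 1) = T (x n)) (n : ℕ) : x n ∈ C := by
  induction n with
  | zero => exact hx0
  | succ n ih => rw [hxs]; exact hT ih

section PicardIteration

variable {X : Type*} [PseudoMetricSpace X] {C : Set X} {T : X → X} {x : ℕ → X}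

theorem dist_apply_le_add_dist_apply_self
    (hne : ∀ x ∈ C, ∀ y ∈ C, dist (T x) (T y) ≤ dist x y) {y p : X} (hy : y ∈ C) (hp : p ∈ C) :
    dist (T y) p ≤ dist y p + dist p (T p) :=
  calc dist (T y) p ≤ dist (T y) (T p) + dist (T p) p := dist_triangle _ _ _
    _ ≤ dist y p + dist p (T p) := by rw [dist_comm (T p)]; gcongr; exact hne y hy p hp

theorem dist_picard_add_le (hT : Set.MapsTo T C C)
    (hne : ∀ x ∈ C, ∀ y ∈ C, dist (T x) (T y) ≤ dist x y) (hx0 : x 0 ∈ C)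
    (hxs : ∀ n, x (n + 1) = T (x n)) {p : X} (hp : p ∈ C) (n l : ℕ) :
    dist (x (n + l)) p ≤ dist (x n) p + l * dist p (T p) := by
  induction l with
  | zero => simp
  | succ l ih =>
    calc dist (x (n + (l + 1))) p = dist (T (x (n + l))) p := by rw [← add_assoc, hxs]
      _ ≤ dist (x (n + l)) p + dist p (T p) :=
        dist_apply_le_add_dist_apply_self hne (picard_mem hT hx0 hxs _) hp
      _ ≤ dist (x n) p + (l + 1 : ℕ) * dist p (T p) := by push_cast; linarith

end PicardIteration

theorem natCast_div_mul_succ_add_one_lt (m r : ℕ) :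
    (m : ℝ) / ((m * (r + 1) : ℕ) + 1) < 1 / (r + 1) := by
  rw [div_lt_div_iff₀ (by positivity) (by positivity)]
  push_cast
  linarith

theorem stmt13 {X : Type*} [MetricSpace X] (C : Set X) (T : X → X)
    (hT : ∀ x ∈ C, T x ∈ C)
    (hne : ∀ x ∈ C, ∀ y ∈ C, dist (T x) (T y) ≤ dist x y)
    (x0 : X) (hx0 : x0 ∈ C) (x : ℕ → X) (hx : x 0 = x0)
    (hxs : ∀ n, x (n + 1) = T (x n)) :
    ∀ r n m : ℕ, ∀ p ∈ C, dist p (T p) ≤ 1 / ((m * (r + 1) : ℕ) + 1) →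
      ∀ l ≤ m, dist (x (n + l)) p < dist (x n) p + 1 / (r + 1) := by
  intro r n m p hp hdp l hl
  have hstep : (l : ℝ) * dist p (T p) ≤ m / ((m * (r + 1) : ℕ) + 1) := by
    rw [← mul_one_div]
    gcongr
  calc dist (x (n + l)) p ≤ dist (x n) p + l * dist p (T p) :=
        dist_picard_add_le hT hne (hx ▸ hx0) hxs hp n l
    _ < dist (x n) p + 1 / (r + 1) := by
        linarith [natCast_div_mul_succ_add_one_lt m r]
end

section
/- In a W-hyperbolic space, the Ishikawa iteration x₀ = x, x_{n+1} = (1−λₙ)xₙ ⊕ λₙT((1−sₙ)xₙ ⊕ sₙTxₙ) of a nonexpansive mapping T : C → C (with λₙ, sₙ ∈ [0,1]) satisfies d(x_{n+m}, p) ≤ d(xₙ, p) + 2m·d(p,Tp) for all n,m ∈ ℕ and p ∈ C. -/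
/-!
Each Ishikawa step moves the distance to a point `p ∈ C` up by at most `2 d(p, Tp)`:
nonexpansiveness gives `d(Tu, p) ≤ d(u, p) + d(p, Tp)`, and a convex combination of `u` with a
point no farther than `d(u, p) + c` from `p` is itself no farther than `d(u, p) + c`. The inner
step costs one `d(p, Tp)`, the outer one another; summing over `m` steps gives the bound.
-/

section

variable {X : Type*} [MetricSpace X]

lemma dist_apply_le_dist_add_dist_apply_self {T : X → X} {u p : X}
    (h : dist (T u) (T p) ≤ dist u p) : dist (T u) p ≤ dist u p + dist p (T p) :=
  calc dist (T u) p ≤ dist (T u) (T p) + dist (T p) p := dist_triangle _ _ _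
    _ ≤ dist u p + dist p (T p) := by rw [dist_comm (T p) p]; linarith

lemma dist_le_of_le_convex_comb {w u v p : X} {l c : ℝ} (hl : l ∈ Set.Icc (0:ℝ) 1)
    (hw : dist p w ≤ (1 - l) * dist p u + l * dist p v) (hv : dist v p ≤ dist u p + c)
    (hc : 0 ≤ c) : dist w p ≤ dist u p + c := by
  rw [dist_comm w p, dist_comm u p]
  rw [dist_comm v p, dist_comm u p] at hv
  nlinarith [hl.1, hl.2]

lemma le_add_mul_of_forall_le_add {a : ℕ → ℝ} {c : ℝ} (h : ∀ k, a (k + 1) ≤ a k + c)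
    (n m : ℕ) : a (n + m) ≤ a n + m * c := by
  induction m with
  | zero => simp
  | succ m ih =>
    calc a (n + (m + 1)) ≤ a (n + m) + c := h (n + m)
      _ ≤ a n + (m + 1 : ℕ) * c := by push_cast; linarith

variable {W : X → X → ℝ → X} {C : Set X} {T : X → X}

lemma dist_convex_comb_apply_le
    (W1 : ∀ x y z : X, ∀ l ∈ Set.Icc (0:ℝ) 1,
      dist z (W x y l) ≤ (1 - l) * dist z x + l * dist z y)
    (hnonexp : ∀ x ∈ C, ∀ y ∈ C, dist (T x) (T y) ≤ dist x y)
    {u v p : X} (hv : v ∈ C) (hp : p ∈ C) {l c : ℝ} (hl : l ∈ Set.Icc (0:ℝ) 1)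
    (hvu : dist v p ≤ dist u p + c) (hc : 0 ≤ c) :
    dist (W u (T v) l) p ≤ dist u p + (c + dist p (T p)) := by
  refine dist_le_of_le_convex_comb hl (W1 _ _ _ _ hl) ?_ (by positivity)
  have := dist_apply_le_dist_add_dist_apply_self (hnonexp v hv p hp)
  linarith

lemma dist_ishikawa_step_le
    (W1 : ∀ x y z : X, ∀ l ∈ Set.Icc (0:ℝ) 1,
      dist z (W x y l) ≤ (1 - l) * dist z x + l * dist z y)
    (hCconv : ∀ x ∈ C, ∀ y ∈ C, ∀ l ∈ Set.Icc (0:ℝ) 1, W x y l ∈ C)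
    (hT : ∀ x ∈ C, T x ∈ C) (hnonexp : ∀ x ∈ C, ∀ y ∈ C, dist (T x) (T y) ≤ dist x y)
    {u p : X} (hu : u ∈ C) (hp : p ∈ C) {s l : ℝ}
    (hs : s ∈ Set.Icc (0:ℝ) 1) (hl : l ∈ Set.Icc (0:ℝ) 1) :
    dist (W u (T (W u (T u) s)) l) p ≤ dist u p + 2 * dist p (T p) := by
  have inner := dist_convex_comb_apply_le (u := u) (c := 0) W1 hnonexp hu hp hs (by simp) le_rfl
  have outer := dist_convex_comb_apply_le W1 hnonexp
    (hCconv _ hu _ (hT u hu) _ hs) hp hl inner (by positivity)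
  linarith

end

theorem stmt14_general {X : Type*} [MetricSpace X] (W : X → X → ℝ → X)
    (W1 : ∀ x y z : X, ∀ l ∈ Set.Icc (0:ℝ) 1,
      dist z (W x y l) ≤ (1 - l) * dist z x + l * dist z y)
    (C : Set X)
    (hCconv : ∀ x ∈ C, ∀ y ∈ C, ∀ l ∈ Set.Icc (0:ℝ) 1, W x y l ∈ C)
    (T : X → X) (hT : ∀ x ∈ C, T x ∈ C)
    (hnonexp : ∀ x ∈ C, ∀ y ∈ C, dist (T x) (T y) ≤ dist x y)
    (lam s : ℕ → ℝ) (hlam : ∀ n, lam n ∈ Set.Icc (0:ℝ) 1)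
    (hs : ∀ n, s n ∈ Set.Icc (0:ℝ) 1)
    (x0 : X) (hx0 : x0 ∈ C) (x : ℕ → X) (hx : x 0 = x0)
    (hxs : ∀ n, x (n + 1) = W (x n) (T (W (x n) (T (x n)) (s n))) (lam n)) :
    ∀ n m : ℕ, ∀ p ∈ C, dist (x (n + m)) p ≤ dist (x n) p + 2 * m * dist p (T p) := by
  have mem : ∀ n, x n ∈ C := by
    intro n
    induction n with
    | zero => exact hx ▸ hx0
    | succ k ih =>
      exact hxs k ▸ hCconv _ ih _ (hT _ (hCconv _ ih _ (hT _ ih) _ (hs k))) _ (hlam k)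
  intro n m p hp
  have step (k : ℕ) : dist (x (k + 1)) p ≤ dist (x k) p + 2 * dist p (T p) :=
    hxs k ▸ dist_ishikawa_step_le W1 hCconv hT hnonexp (mem k) hp (hs k) (hlam k)
  have := le_add_mul_of_forall_le_add (a := fun k => dist (x k) p) step n m
  linarith

theorem stmt14 {X : Type*} [MetricSpace X] (W : X → X → ℝ → X)
    (W1 : ∀ x y z : X, ∀ l ∈ Set.Icc (0:ℝ) 1,
      dist z (W x y l) ≤ (1 - l) * dist z x + l * dist z y)
    (W2 : ∀ x y : X, ∀ l ∈ Set.Icc (0:ℝ) 1, ∀ l' ∈ Set.Icc (0:ℝ) 1,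
      dist (W x y l) (W x y l') = |l - l'| * dist x y)
    (W3 : ∀ x y : X, ∀ l ∈ Set.Icc (0:ℝ) 1, W x y l = W y x (1 - l))
    (W4 : ∀ x y z w : X, ∀ l ∈ Set.Icc (0:ℝ) 1,
      dist (W x z l) (W y w l) ≤ (1 - l) * dist x y + l * dist z w)
    (C : Set X)
    (hCconv : ∀ x ∈ C, ∀ y ∈ C, ∀ l ∈ Set.Icc (0:ℝ) 1, W x y l ∈ C)
    (T : X → X) (hT : ∀ x ∈ C, T x ∈ C)
    (hnonexp : ∀ x ∈ C, ∀ y ∈ C, dist (T x) (T y) ≤ dist x y)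
    (lam s : ℕ → ℝ) (hlam : ∀ n, lam n ∈ Set.Icc (0:ℝ) 1)
    (hs : ∀ n, s n ∈ Set.Icc (0:ℝ) 1)
    (x0 : X) (hx0 : x0 ∈ C) (x : ℕ → X) (hx : x 0 = x0)
    (hxs : ∀ n, x (n + 1) = W (x n) (T (W (x n) (T (x n)) (s n))) (lam n)) :
    ∀ n m : ℕ, ∀ p ∈ C, dist (x (n + m)) p ≤ dist (x n) p + 2 * m * dist p (T p) :=
  stmt14_general W W1 C hCconv T hT hnonexp lam s hlam hs x0 hx0 x hx hxs
end

section
/- Let T : C → C satisfy condition (E_μ) with μ ≥ 1 on a subset C of a metric space. Then Fix(T), represented by AF_k = {x ∈ C : d(x,Tx) ≤ 1/(k+1)}, is uniformly closed with moduli δ_F(k) = 2μ(k+1)−1 and ω_F(k) = 4k+3: for all k ∈ ℕ and p,q ∈ C, if d(q,Tq) ≤ 1/(2μ(k+1)) and d(p,q) ≤ 1/(4(k+1)), then d(p,Tp) ≤ 1/(k+1). -/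
section

variable {X : Type*} [MetricSpace X]

def SatisfiesConditionE (C : Set X) (T : X → X) (μ : ℝ) : Prop :=
  ∀ x ∈ C, ∀ y ∈ C, dist x (T y) ≤ μ * dist (T x) x + dist x y

namespace SatisfiesConditionE

variable {C : Set X} {T : X → X} {μ : ℝ}

theorem dist_apply_le (hE : SatisfiesConditionE C T μ) {p q : X} (hp : p ∈ C) (hq : q ∈ C) :
    dist p (T p) ≤ 2 * dist p q + μ * dist q (T q) := by
  have hqp : dist q (T p) ≤ μ * dist q (T q) + dist p q := by
    simpa only [dist_comm] using hE q hq p hp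
  linarith [dist_triangle p q (T p)]

theorem dist_apply_le_of_le (hE : SatisfiesConditionE C T μ) (hμ : 0 < μ) {ε : ℝ}
    {p q : X} (hp : p ∈ C) (hq : q ∈ C)
    (hq_fix : dist q (T q) ≤ ε / (2 * μ)) (hpq : dist p q ≤ ε / 4) :
    dist p (T p) ≤ ε :=
  calc dist p (T p) ≤ 2 * dist p q + μ * dist q (T q) := hE.dist_apply_le hp hq
    _ ≤ 2 * (ε / 4) + μ * (ε / (2 * μ)) := by gcongr
    _ = ε := by field_simp; ring

end SatisfiesConditionE

end

theorem stmt16_general {X : Type*} [MetricSpace X] (C : Set X) (T : X → X)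
    (μ : ℝ) (hμ : 1 ≤ μ)
    (hE : ∀ x ∈ C, ∀ y ∈ C, dist x (T y) ≤ μ * dist (T x) x + dist x y) :
    ∀ k : ℕ, ∀ p ∈ C, ∀ q ∈ C,
      dist q (T q) ≤ 1 / (2 * μ * (k + 1)) → dist p q ≤ 1 / (4 * (k + 1)) →
      dist p (T p) ≤ 1 / (k + 1) := by
  intro k p hp q hq hq_fix hpq
  have hE' : SatisfiesConditionE C T μ := hE
  refine hE'.dist_apply_le_of_le (by linarith) hp hq ?_ ?_
  · rwa [div_div, mul_comm _ (2 * μ)]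
  · rwa [div_div, mul_comm _ 4]

theorem stmt16 {X : Type*} [MetricSpace X] (C : Set X) (T : X → X)
    (hT : ∀ x ∈ C, T x ∈ C) (μ : ℝ) (hμ : 1 ≤ μ)
    (hE : ∀ x ∈ C, ∀ y ∈ C, dist x (T y) ≤ μ * dist (T x) x + dist x y) :
    ∀ k : ℕ, ∀ p ∈ C, ∀ q ∈ C,
      dist q (T q) ≤ 1 / (2 * μ * (k + 1)) → dist p q ≤ 1 / (4 * (k + 1)) →
      dist p (T p) ≤ 1 / (k + 1) :=
  stmt16_general C T μ hμ hE
end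

section
/- Suppose (xₙ) is a sequence in a Hilbert space, p is a point, and ‖x_{n+1} − p‖² ≤ ‖xₙ − p‖² − ‖xₙ − x_{n+1}‖² for all n, with ‖x₀ − p‖ ≤ b for some b > 0. Then liminf ‖xₙ − x_{n+1}‖ = 0 with modulus Δ(k,L,b) := ⌈b²(k+1)²⌉ + L − 1: for every k, L ∈ ℕ there exists N with L ≤ N ≤ Δ(k,L,b) and ‖x_N − x_{N+1}‖ ≤ 1/(k+1). -/
/-!
Both `‖xₙ - p‖²` and `‖xₙ - xₙ₊₁‖²` are nonnegative, so the step inequality makes `‖xₙ - p‖²`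
nonincreasing and telescopes: any `M` consecutive values of `‖xₙ - xₙ₊₁‖²` sum to at most
`‖x₀ - p‖² ≤ b²`. With `M = ⌈b²(k+1)²⌉` they cannot all exceed `1/(k+1)²`.
-/

open Finset

theorem sum_range_le_sub_of_succ_le_sub {u d : ℕ → ℝ} (h : ∀ n, u (n + 1) ≤ u n - d n) (a m : ℕ) :
    ∑ i ∈ range m, d (a + i) ≤ u a - u (a + m) := by
  calc ∑ i ∈ range m, d (a + i) ≤ ∑ i ∈ range m, (u (a + i) - u (a + (i + 1))) :=
        sum_le_sum fun i _ => by rw [← add_assoc]; linarith [h (a + i)]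
    _ = u a - u (a + m) := sum_range_sub' (fun i => u (a + i)) m

theorem exists_le_of_succ_le_sub {u d : ℕ → ℝ} (hu : ∀ n, 0 ≤ u n) (hd : ∀ n, 0 ≤ d n)
    (h : ∀ n, u (n + 1) ≤ u n - d n) {ε : ℝ} (L M : ℕ) (hM : 0 < M) (hMε : u 0 ≤ M * ε) :
    ∃ N, L ≤ N ∧ N < L + M ∧ d N ≤ ε := by
  have hanti : Antitone u := antitone_nat_of_succ_le fun n => by linarith [h n, hd n]
  have hsum : ∑ i ∈ range M, d (L + i) ≤ ∑ _i ∈ range M, ε := by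
    rw [sum_const, card_range, nsmul_eq_mul]
    linarith [sum_range_le_sub_of_succ_le_sub h L M, hanti (Nat.zero_le L), hu (L + M)]
  obtain ⟨i, hi, hdi⟩ := exists_le_of_sum_le (nonempty_range_iff.mpr hM.ne') hsum
  exact ⟨L + i, Nat.le_add_right L i, Nat.add_lt_add_left (mem_range.mp hi) L, hdi⟩

theorem stmt19_general {H : Type*} [NormedAddCommGroup H]
    (x : ℕ → H) (p : H) (b : ℝ) (hb : 0 < b) (hx0 : ‖x 0 - p‖ ≤ b)
    (hstep : ∀ n : ℕ, ‖x (n + 1) - p‖ ^ 2 ≤ ‖x n - p‖ ^ 2 - ‖x n - x (n + 1)‖ ^ 2) :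
    ∀ k L : ℕ, ∃ N : ℕ, L ≤ N ∧ N ≤ ⌈b ^ 2 * (k + 1) ^ 2⌉₊ + L - 1 ∧
      ‖x N - x (N + 1)‖ ≤ 1 / (k + 1) := by
  intro k L
  set M := ⌈b ^ 2 * ((k : ℝ) + 1) ^ 2⌉₊
  have hM : 0 < M := Nat.ceil_pos.mpr (by positivity)
  have hMε : ‖x 0 - p‖ ^ 2 ≤ M * (1 / (k + 1)) ^ 2 :=
    calc ‖x 0 - p‖ ^ 2 ≤ b ^ 2 := pow_le_pow_left₀ (norm_nonneg _) hx0 2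
      _ = b ^ 2 * ((k : ℝ) + 1) ^ 2 * (1 / (k + 1)) ^ 2 := by field_simp
      _ ≤ M * (1 / (k + 1)) ^ 2 := by gcongr; exact Nat.le_ceil _
  obtain ⟨N, hLN, hNM, hN⟩ := exists_le_of_succ_le_sub (fun n => sq_nonneg ‖x n - p‖)
    (fun n => sq_nonneg ‖x n - x (n + 1)‖) hstep L M hM hMε
  refine ⟨N, hLN, by omega, ?_⟩
  exact (pow_le_pow_iff_left₀ (norm_nonneg _) (by positivity) two_ne_zero).mp hN

theorem stmt19 {H : Type*} [NormedAddCommGroup H] [InnerProductSpace ℝ H]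
    (x : ℕ → H) (p : H) (b : ℝ) (hb : 0 < b) (hx0 : ‖x 0 - p‖ ≤ b)
    (hstep : ∀ n : ℕ, ‖x (n + 1) - p‖ ^ 2 ≤ ‖x n - p‖ ^ 2 - ‖x n - x (n + 1)‖ ^ 2) :
    ∀ k L : ℕ, ∃ N : ℕ, L ≤ N ∧ N ≤ ⌈b ^ 2 * (k + 1) ^ 2⌉₊ + L - 1 ∧
      ‖x N - x (N + 1)‖ ≤ 1 / (k + 1) :=
  stmt19_general x p b hb hx0 hstep
end
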